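/- arXiv:1904.02581 — 6 statements merged into one kernel-verified Lean document; each statement's English description precedes it below -/
import Mathlib

section
/- For any integers m ≥ n ≥ 2, the rectangular supergrid graph R(m,n) contains a Hamiltonian cycle. -/
open SimpleGraph

/-- The infinite supergrid graph on ℤ²: distinct points adjacent iff both
coordinate differences are at most 1. -/
def SG : SimpleGraph (ℤ × ℤ) where
  Adj u v := u ≠ v ∧ |u.1 - v.1| ≤ 1 ∧ |u.2 - v.2| ≤ 1
  symm := by
    constructor
    intro u v h
    exact ⟨h.1.symm, by rw [abs_sub_comm]; exact h.2.1, by rw [abs_sub_comm]; exact h.2.2⟩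
  loopless := by constructor; intro u h; exact h.1 rfl

/-- Vertex set of the rectangular supergrid graph R(m,n). -/
def RectSet (m n : ℤ) : Set (ℤ × ℤ) := {p | 1 ≤ p.1 ∧ p.1 ≤ m ∧ 1 ≤ p.2 ∧ p.2 ≤ n}

/-- The rectangular supergrid graph R(m,n). -/
def Rect (m n : ℤ) : SimpleGraph (RectSet m n) := SG.induce (RectSet m n)

/-- Vertex set of the L-shaped supergrid graph L(m,n;k,l): the rectangle
R(m,n) with the rectangle R(k,l) removed from the upper-right corner. -/
def LSet (m n k l : ℤ) : Set (ℤ × ℤ) :=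
  {p | (1 ≤ p.1 ∧ p.1 ≤ m ∧ 1 ≤ p.2 ∧ p.2 ≤ n) ∧ ¬ (m - k + 1 ≤ p.1 ∧ p.2 ≤ l)}

/-- The L-shaped supergrid graph L(m,n;k,l). -/
def LG (m n k l : ℤ) : SimpleGraph (LSet m n k l) := SG.induce (LSet m n k l)

/-!
Keep the bottom row of the rectangle for the way back. The rows above it are covered by a
Hamiltonian path from their lower-left to their lower-right corner: a snake of vertical runs
over an odd number of columns, preceded by a single column when the width is even and by a
two-column zigzag when it is odd. The zigzag steps diagonally from `(x + 1, b)` to `(x, b + 1)`;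
this is the only place where the supergrid differs from the ordinary grid, in which odd × odd
rectangles have no Hamiltonian cycle. Returning along the bottom row closes the cycle.
-/

namespace SimpleGraph

variable {V : Type*} (G : SimpleGraph V)

def HamiltonianPathOn (S : Set V) (a b : V) : Prop :=
  ∃ p : G.Walk a b, p.IsPath ∧ ∀ x, x ∈ p.support ↔ x ∈ S

variable {G} {S T : Set V} {a b c d : V}

namespace HamiltonianPathOn

theorem singleton (a : V) : G.HamiltonianPathOn {a} a a :=
  ⟨.nil, .nil, by simp⟩

theorem reverse (h : G.HamiltonianPathOn S a b) : G.HamiltonianPathOn S b a := by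
  obtain ⟨p, hp, hS⟩ := h
  exact ⟨p.reverse, hp.reverse, by simpa using hS⟩

theorem append (h₁ : G.HamiltonianPathOn S a b) (h₂ : G.HamiltonianPathOn T c d)
    (hbc : G.Adj b c) (hST : Disjoint S T) : G.HamiltonianPathOn (S ∪ T) a d := by
  obtain ⟨p, hp, hpS⟩ := h₁
  obtain ⟨q, hq, hqT⟩ := h₂
  refine ⟨p.append (.cons hbc q), ?_, fun x => ?_⟩
  · rw [Walk.isPath_def, Walk.support_append, Walk.support_cons, List.tail_cons,
      List.nodup_append]
    exact ⟨hp.support_nodup, hq.support_nodup, fun x hx y hy hxy =>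
      hST.ne_of_mem ((hpS x).1 hx) ((hqT y).1 hy) hxy⟩
  · simp only [Walk.support_append, Walk.support_cons, List.tail_cons, List.mem_append, hpS, hqT,
      Set.mem_union]

theorem exists_isHamiltonianCycle_induce [DecidableEq V] (h : G.HamiltonianPathOn S a b)
    (hba : G.Adj b a) (hc : c ∈ S) (hca : c ≠ a) (hcb : c ≠ b) :
    ∃ (v : S) (w : (G.induce S).Walk v v), w.IsHamiltonianCycle := by
  obtain ⟨p, hp, hS⟩ := h
  have hcyc : (Walk.cons hba p).IsCycle := by
    refine (Walk.cons_isCycle_iff p hba).2 ⟨hp, fun he => ?_⟩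
    -- a path from `a` to `b` through the edge `ab` is `[a, b]`, which misses `c`
    rw [hp.eq_adj_toWalk_of_mem_edges (Sym2.eq_swap ▸ he)] at hS
    simp only [Walk.support_cons, Walk.support_nil, List.mem_cons, List.not_mem_nil,
      or_false] at hS
    exact hca (((hS c).2 hc).resolve_right hcb)
  have hsub : ∀ x ∈ (Walk.cons hba p).support, x ∈ S := by
    simpa [hS] using (hS b).1 p.end_mem_support
  refine ⟨_, (Walk.cons hba p).induce S hsub, ?_⟩
  have hcyc_induce : ((Walk.cons hba p).induce S hsub).IsCycle := by
    rwa [← Walk.isCycle_map_iff_of_injective (f := (Embedding.induce S).toHom)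
      Subtype.val_injective, Walk.map_induce]
  refine ⟨hcyc_induce, hcyc_induce.isPath_tail.isHamiltonian_of_mem fun x => ?_⟩
  rw [Walk.support_tail_of_not_nil _ hcyc_induce.not_nil, Walk.support_induce, List.tail_attachWith]
  simp [hS]

end HamiltonianPathOn

end SimpleGraph

namespace SG

open Set

theorem adj_mk_iff {x y x' y' : ℤ} :
    SG.Adj (x, y) (x', y') ↔
      (x ≠ x' ∨ y ≠ y') ∧ -1 ≤ x - x' ∧ x - x' ≤ 1 ∧ -1 ≤ y - y' ∧ y - y' ≤ 1 := by
  simp only [SG, ne_eq, Prod.mk.injEq, abs_le]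
  tauto

variable {a b : ℤ}

theorem hamiltonianPathOn_column (x : ℤ) (hab : a ≤ b) :
    SG.HamiltonianPathOn ({x} ×ˢ Icc a b) (x, a) (x, b) := by
  induction b, hab using Int.leInduction with
  | base => simpa using HamiltonianPathOn.singleton (G := SG) (x, a)
  | succ b hab ih =>
    have h := ih.append (.singleton (x, b + 1)) (adj_mk_iff.2 (by omega)) <|
      disjoint_left.2 fun ⟨p, q⟩ h₁ h₂ => by
        simp only [mem_prod, mem_Icc, mem_singleton_iff, Prod.mk.injEq] at h₁ h₂
        omega
    convert h using 1
    ext ⟨p, q⟩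
    simp only [mem_prod, mem_Icc, mem_singleton_iff, mem_union, Prod.mk.injEq]
    omega

theorem hamiltonianPathOn_row (y : ℤ) (hab : a ≤ b) :
    SG.HamiltonianPathOn (Icc a b ×ˢ {y}) (a, y) (b, y) := by
  induction b, hab using Int.leInduction with
  | base => simpa using HamiltonianPathOn.singleton (G := SG) (a, y)
  | succ b hab ih =>
    have h := ih.append (.singleton (b + 1, y)) (adj_mk_iff.2 (by omega)) <|
      disjoint_left.2 fun ⟨p, q⟩ h₁ h₂ => by
        simp only [mem_prod, mem_Icc, mem_singleton_iff, Prod.mk.injEq] at h₁ h₂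
        omega
    convert h using 1
    ext ⟨p, q⟩
    simp only [mem_prod, mem_Icc, mem_singleton_iff, mem_union, Prod.mk.injEq]
    omega

theorem hamiltonianPathOn_zigzag (x : ℤ) (hab : a ≤ b) :
    SG.HamiltonianPathOn (Icc x (x + 1) ×ˢ Icc a b) (x, a) (x + 1, b) := by
  induction b, hab using Int.leInduction with
  | base => simpa using hamiltonianPathOn_row a (by omega : x ≤ x + 1)
  | succ b hab ih =>
    have h := ih.append (hamiltonianPathOn_row (b + 1) (by omega : x ≤ x + 1))
      (adj_mk_iff.2 (by omega)) <|
      disjoint_left.2 fun ⟨p, q⟩ h₁ h₂ => by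
        simp only [mem_prod, mem_Icc, mem_singleton_iff] at h₁ h₂
        omega
    convert h using 1
    ext ⟨p, q⟩
    simp only [mem_prod, mem_Icc, mem_singleton_iff, mem_union]
    omega

theorem hamiltonianPathOn_snake (x : ℤ) (hab : a ≤ b) (k : ℕ) :
    SG.HamiltonianPathOn (Icc x (x + 2 * k) ×ˢ Icc a b) (x, b) (x + 2 * k, a) := by
  induction k with
  | zero => simpa using (hamiltonianPathOn_column x hab).reverse
  | succ k ih =>
    have hturn := (hamiltonianPathOn_column (x + 2 * k + 1) hab).append
      (hamiltonianPathOn_column (x + 2 * k + 2) hab).reverse (adj_mk_iff.2 (by omega)) <|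
      disjoint_left.2 fun ⟨p, q⟩ h₁ h₂ => by
        simp only [mem_prod, mem_Icc, mem_singleton_iff] at h₁ h₂
        omega
    have h := ih.append hturn (adj_mk_iff.2 (by omega)) <|
      disjoint_left.2 fun ⟨p, q⟩ h₁ h₂ => by
        simp only [mem_prod, mem_Icc, mem_singleton_iff, mem_union] at h₁ h₂
        omega
    convert h using 2
    · ext ⟨p, q⟩
      simp only [mem_prod, mem_Icc, mem_singleton_iff, mem_union]
      omega
    · push_cast
      ring

theorem hamiltonianPathOn_rect {x y : ℤ} (hxy : x < y) (hab : a ≤ b) :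
    SG.HamiltonianPathOn (Icc x y ×ˢ Icc a b) (x, a) (y, a) := by
  obtain ⟨k, hk | hk⟩ := Int.even_or_odd' (y - x)
  · have h := (hamiltonianPathOn_zigzag x hab).append
      (hamiltonianPathOn_snake (x + 2) hab (k - 1).toNat) (adj_mk_iff.2 (by omega)) <|
      disjoint_left.2 fun ⟨p, q⟩ h₁ h₂ => by
        simp only [mem_prod, mem_Icc] at h₁ h₂
        omega
    convert h using 2
    · ext ⟨p, q⟩
      simp only [mem_prod, mem_Icc, mem_union]
      omega
    · omega
  · have h := (hamiltonianPathOn_column x hab).append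
      (hamiltonianPathOn_snake (x + 1) hab k.toNat) (adj_mk_iff.2 (by omega)) <|
      disjoint_left.2 fun ⟨p, q⟩ h₁ h₂ => by
        simp only [mem_prod, mem_Icc, mem_singleton_iff] at h₁ h₂
        omega
    convert h using 2
    · ext ⟨p, q⟩
      simp only [mem_prod, mem_Icc, mem_singleton_iff, mem_union]
      omega
    · omega

theorem exists_isHamiltonianCycle_induce_rect {x y : ℤ} (hxy : x < y) (hab : a < b) :
    ∃ (v : ↥(Icc x y ×ˢ Icc a b)) (w : (SG.induce (Icc x y ×ˢ Icc a b)).Walk v v),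
      w.IsHamiltonianCycle := by
  have h := (hamiltonianPathOn_rect hxy (by omega : a + 1 ≤ b)).append
    (hamiltonianPathOn_row a hxy.le).reverse (adj_mk_iff.2 (by omega)) <|
    disjoint_left.2 fun ⟨p, q⟩ h₁ h₂ => by
      simp only [mem_prod, mem_Icc, mem_singleton_iff] at h₁ h₂
      omega
  have hS : Icc x y ×ˢ Icc (a + 1) b ∪ Icc x y ×ˢ {a} = Icc x y ×ˢ Icc a b := by
    ext ⟨p, q⟩
    simp only [mem_prod, mem_Icc, mem_singleton_iff, mem_union]
    omega
  rw [hS] at h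
  refine h.exists_isHamiltonianCycle_induce (c := (x + 1, a + 1)) (adj_mk_iff.2 (by omega))
    ?_ (by simp) (by simp)
  simp only [mem_prod, mem_Icc]
  omega

end SG

/-- For m ≥ n ≥ 2, R(m,n) contains a Hamiltonian cycle. -/
theorem stmt_0 (m n : ℤ) (hn : 2 ≤ n) (hmn : n ≤ m) :
    ∃ (v : RectSet m n) (c : (Rect m n).Walk v v), c.IsHamiltonianCycle := by
  have hR : RectSet m n = Set.Icc 1 m ×ˢ Set.Icc 1 n := by
    ext ⟨p, q⟩
    simp only [RectSet, Set.mem_ofPred_eq, Set.mem_prod, Set.mem_Icc]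
    tauto
  rw [Rect, hR]
  exact SG.exists_isHamiltonianCycle_induce_rect (by omega) (by omega)
end

section
/- Let R(m,2) be a rectangular supergrid graph with m ≥ 2, and let s=(s_x,s_y), t=(t_x,t_y) be distinct vertices with s_x = t_x and 2 ≤ s_x ≤ m−1. Then {s,t} is a vertex cut of R(m,2), and consequently R(m,2) has no Hamiltonian (s,t)-path. -/
/-!
Adjacent vertices of a supergrid differ by at most one in their x-coordinate, so every walk from
column 1 to column m meets column `s_x`, which in R(m,2) consists of `s` and `t` alone. Hence
(1,1) and (m,1) lie in different components of R(m,2) − {s,t}. A Hamiltonian (s,t)-path cannot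
exist: with its two ends removed it is a walk through every other vertex, which would connect
R(m,2) − {s,t}.
-/

open SimpleGraph

namespace SimpleGraph.Walk

variable {V : Type*} {G : SimpleGraph V}

theorem exists_mem_support_eq_of_le_of_le (f : V → ℤ) (hf : ∀ u v, G.Adj u v → |f u - f v| ≤ 1)
    {c : ℤ} {u v : V} (p : G.Walk u v) (hu : f u ≤ c) (hv : c ≤ f v) :
    ∃ z ∈ p.support, f z = c := by
  induction p with
  | nil => exact ⟨_, List.mem_singleton_self _, le_antisymm hu hv⟩
  | @cons u x v h p ih =>
    by_cases hux : f u = c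
    · exact ⟨u, p.support.mem_cons_self, hux⟩
    · have := abs_le.mp (hf u x h)
      obtain ⟨z, hz, hzc⟩ := ih (by omega) hv
      exact ⟨z, List.mem_cons_of_mem _ hz, hzc⟩

theorem IsHamiltonian.preconnected_induce_ne [DecidableEq V] {s t : V} {w : G.Walk s t}
    (hw : w.IsHamiltonian) : (G.induce {v | v ≠ s ∧ v ≠ t}).Preconnected := by
  rintro ⟨u, hus, hut⟩ y
  have hw_nil : ¬ w.Nil := fun h => hus (by simpa [nil_iff_support_eq.mp h] using hw.mem_support u)
  have htail_nil : ¬ w.tail.Nil := fun h => by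
    have hu := hw.mem_support u
    rw [← cons_support_tail hw_nil, nil_iff_support_eq.mp h, h.eq] at hu
    simp_all
  set q := w.tail.dropLast
  have hsupp : w.support = s :: (q.support ++ [t]) := by
    rw [← cons_support_tail hw_nil, support_dropLast_concat htail_nil]
  have hnodup := hw.isPath.support_nodup
  rw [hsupp] at hnodup
  suffices {v | v ≠ s ∧ v ≠ t} = {v | v ∈ q.support} from
    (this ▸ q.connected_induce_support).preconnected _ _
  ext v
  have hv := hw.mem_support v
  rw [hsupp] at hv
  simp only [List.nodup_cons, List.mem_append, List.mem_cons, List.not_mem_nil, or_false, not_or,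
    Set.mem_ofPred_eq] at hnodup hv ⊢
  grind

end SimpleGraph.Walk

theorem RectSet.eq_or_eq_of_fst_eq {m : ℤ} {s t v : RectSet m 2} (hst : s ≠ t)
    (hx : s.val.1 = t.val.1) (hv : v.val.1 = s.val.1) : v = s ∨ v = t := by
  obtain ⟨-, -, _, _⟩ := s.2
  obtain ⟨-, -, _, _⟩ := t.2
  obtain ⟨-, -, _, _⟩ := v.2
  simp only [ne_eq, Subtype.ext_iff, Prod.ext_iff] at hst ⊢
  omega

theorem Rect.mem_support_of_fst_le_of_le {m : ℤ} {s t : RectSet m 2} (hst : s ≠ t)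
    (hx : s.val.1 = t.val.1) {u v : RectSet m 2} (p : (Rect m 2).Walk u v)
    (hu : u.val.1 ≤ s.val.1) (hv : s.val.1 ≤ v.val.1) : s ∈ p.support ∨ t ∈ p.support := by
  obtain ⟨z, hz, hzs⟩ := p.exists_mem_support_eq_of_le_of_le (G := Rect m 2) (fun v => v.val.1)
    (fun _ _ h => h.2.1) hu hv
  rcases RectSet.eq_or_eq_of_fst_eq hst hx hzs with rfl | rfl <;> simp [hz]

theorem Rect.not_preconnected_induce_ne {m : ℤ} {s t : RectSet m 2} (hst : s ≠ t)
    (hx : s.val.1 = t.val.1) (h2 : 2 ≤ s.val.1) (hm1 : s.val.1 ≤ m - 1) :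
    ¬ ((Rect m 2).induce {v | v ≠ s ∧ v ≠ t}).Preconnected := by
  intro hconn
  let a : RectSet m 2 := ⟨(1, 1), by simp only [RectSet, Set.mem_ofPred_eq]; omega⟩
  let b : RectSet m 2 := ⟨(m, 1), by simp only [RectSet, Set.mem_ofPred_eq]; omega⟩
  have off_column (v : RectSet m 2) (hv : v.val.1 ≠ s.val.1) : v ≠ s ∧ v ≠ t :=
    ⟨by rintro rfl; exact hv rfl, by rintro rfl; exact hv hx.symm⟩
  obtain ⟨p⟩ := hconn ⟨a, off_column a (show (1 : ℤ) ≠ s.val.1 by omega)⟩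
    ⟨b, off_column b (show m ≠ s.val.1 by omega)⟩
  have := Rect.mem_support_of_fst_le_of_le hst hx (p.map (Embedding.induce _).toHom)
    (show (1 : ℤ) ≤ s.val.1 by omega) (show s.val.1 ≤ m by omega)
  simp only [Walk.support_map, List.mem_map] at this
  rcases this with ⟨x, -, hxs⟩ | ⟨x, -, hxt⟩
  · exact x.2.1 hxs
  · exact x.2.2 hxt

theorem stmt_2_general (m : ℤ) (s t : RectSet m 2) (hst : s ≠ t)
    (hx : s.val.1 = t.val.1) (h2 : 2 ≤ s.val.1) (hm1 : s.val.1 ≤ m - 1) :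
    ¬ ((Rect m 2).induce {v | v ≠ s ∧ v ≠ t}).Connected ∧
      ∀ w : (Rect m 2).Walk s t, ¬ (w.IsPath ∧ w.IsHamiltonian) := by
  have hcut := Rect.not_preconnected_induce_ne hst hx h2 hm1
  exact ⟨fun h => hcut h.preconnected, fun w ⟨_, hw⟩ => hcut hw.preconnected_induce_ne⟩

/-- If s,t are distinct vertices of R(m,2) with s_x = t_x and 2 ≤ s_x ≤ m-1,
then {s,t} is a vertex cut of R(m,2) and there is no Hamiltonian (s,t)-path. -/
theorem stmt_2 (m : ℤ) (hm : 2 ≤ m) (s t : RectSet m 2) (hst : s ≠ t)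
    (hx : s.val.1 = t.val.1) (h2 : 2 ≤ s.val.1) (hm1 : s.val.1 ≤ m - 1) :
    ¬ ((Rect m 2).induce {v | v ≠ s ∧ v ≠ t}).Connected ∧
      ∀ w : (Rect m 2).Walk s t, ¬ (w.IsPath ∧ w.IsHamiltonian) :=
  stmt_2_general m s t hst hx h2 hm1
end

section
/- Let R(m,n) be a rectangular supergrid graph with m ≥ 3 and n ≥ 2, and let s=(1,1), t=(2,1), f=(3,1). Then there exists a Hamiltonian (s,t)-path P of R(m,n) such that the edge (t,f) is on P. -/
/-! Above the bottom row, the rows `2, …, n` are covered from `(1, 2)` to `(m, 2)` by pairs of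
columns, each walked up and then down; if `m` is odd, one block of three columns is walked up the
first column and then down the other two in a zigzag, using the diagonal edges. Prefixing `(1, 1)`
and appending the bottom row from `(m, 1)` leftwards gives a Hamiltonian path that ends with
`(3, 1), (2, 1)`. -/

open SimpleGraph

namespace SimpleGraph

variable {V : Type*} {G : SimpleGraph V}

def HamPathOn (G : SimpleGraph V) (S : Set V) (a b : V) : Prop :=
  ∃ w : G.Walk a b, w.IsPath ∧ ∀ x, x ∈ w.support ↔ x ∈ S

namespace HamPathOn

variable {S T : Set V} {a b c d : V}

lemma singleton (a : V) : G.HamPathOn {a} a a :=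
  ⟨.nil, .nil, by simp⟩

lemma reverse (h : G.HamPathOn S a b) : G.HamPathOn S b a := by
  obtain ⟨w, hw, hS⟩ := h
  exact ⟨w.reverse, hw.reverse, by simpa using hS⟩

lemma append (h₁ : G.HamPathOn S a b) (h₂ : G.HamPathOn T c d) (hbc : G.Adj b c)
    (hST : Disjoint S T) : G.HamPathOn (S ∪ T) a d := by
  obtain ⟨w₁, hw₁, hS⟩ := h₁
  obtain ⟨w₂, hw₂, hT⟩ := h₂
  have hsupp : (w₁.append (.cons hbc w₂)).support = w₁.support ++ w₂.support := by
    rw [Walk.support_append, Walk.support_cons, List.tail_cons]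
  refine ⟨w₁.append (.cons hbc w₂), ?_, fun x => by
    simp only [hsupp, List.mem_append, hS, hT, Set.mem_union]⟩
  rw [Walk.isPath_def, hsupp]
  exact hw₁.support_nodup.append hw₂.support_nodup fun x hx₁ hx₂ =>
    Set.disjoint_left.1 hST ((hS x).1 hx₁) ((hT x).1 hx₂)

lemma pair (hab : G.Adj a b) : G.HamPathOn {a, b} a b := by
  rw [Set.insert_eq]
  exact (singleton a).append (singleton b) hab (by simpa using hab.ne)

lemma exists_walk_concat (h : G.HamPathOn S a b) (hbc : G.Adj b c) (hc : c ∉ S) :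
    ∃ w : G.Walk a c,
      w.IsPath ∧ (∀ x, x ∈ w.support ↔ x ∈ insert c S) ∧ s(b, c) ∈ w.edges := by
  obtain ⟨w, hw, hS⟩ := h
  refine ⟨w.concat hbc, hw.concat (fun hcw => hc ((hS c).1 hcw)) hbc, fun x => ?_,
    by simp [Walk.edges_concat]⟩
  simp [Walk.support_concat, hS, or_comm]

end HamPathOn

namespace Walk

variable {S : Set V} {u v : V} {w : G.Walk u v}

lemma IsPath.isHamiltonian_induce [DecidableEq V] (hw : w.IsPath)
    (hS : ∀ x, x ∈ w.support ↔ x ∈ S) :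
    (w.induce S fun x hx => (hS x).1 hx).IsHamiltonian := by
  refine IsPath.isHamiltonian_of_mem ?_ fun x => ?_
  · exact IsPath.of_map (f := (Embedding.induce S).toHom) (by rwa [map_induce])
  · simpa [support_induce] using (hS x).2 x.2

lemma mem_edges_induce (hw : ∀ x ∈ w.support, x ∈ S) {x y : S} :
    s(x, y) ∈ (w.induce S hw).edges ↔ s(x.val, y.val) ∈ w.edges := by
  have h := edges_map (Embedding.induce S).toHom (w.induce S hw)
  rw [map_induce] at h
  rw [← List.mem_map_of_injective (Sym2.map.injective Subtype.val_injective)]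
  exact Iff.of_eq (congrArg _ h.symm)

end Walk

end SimpleGraph

namespace SG

open Set

lemma adj_iff {x y x' y' : ℤ} :
    SG.Adj (x, y) (x', y') ↔
      (x ≠ x' ∨ y ≠ y') ∧ x - x' ≤ 1 ∧ x' - x ≤ 1 ∧ y - y' ≤ 1 ∧ y' - y ≤ 1 := by
  simp only [SG, ne_eq, Prod.ext_iff, not_and_or, abs_le]
  omega

variable {lo hi : ℤ}

lemma hamPathOn_column (x : ℤ) (h : lo ≤ hi) :
    SG.HamPathOn ({x} ×ˢ Icc lo hi) (x, lo) (x, hi) := by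
  induction hi, h using Int.leInduction with
  | base => simpa using HamPathOn.singleton (G := SG) (x, lo)
  | succ hi hlo ih =>
    have hset : {x} ×ˢ Icc lo (hi + 1) = {x} ×ˢ Icc lo hi ∪ {(x, hi + 1)} := by
      ext ⟨p, q⟩
      simp only [mem_prod, mem_Icc, mem_singleton_iff, mem_union, Prod.ext_iff]
      omega
    rw [hset]
    exact ih.append (.singleton _) (adj_iff.2 (by omega)) (by simp)

lemma hamPathOn_row (y : ℤ) {a b : ℤ} (h : a ≤ b) :
    SG.HamPathOn (Icc a b ×ˢ {y}) (a, y) (b, y) := by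
  induction b, h using Int.leInduction with
  | base => simpa using HamPathOn.singleton (G := SG) (a, y)
  | succ b hab ih =>
    have hset : Icc a (b + 1) ×ˢ {y} = Icc a b ×ˢ {y} ∪ {(b + 1, y)} := by
      ext ⟨p, q⟩
      simp only [mem_prod, mem_Icc, mem_singleton_iff, mem_union, Prod.ext_iff]
      omega
    rw [hset]
    exact ih.append (.singleton _) (adj_iff.2 (by omega)) (by simp)

lemma hamPathOn_zigzag (x : ℤ) (h : lo ≤ hi) :
    SG.HamPathOn (Icc x (x + 1) ×ˢ Icc lo hi) (x, hi) (x + 1, lo) := by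
  induction hi, h using Int.leInduction with
  | base =>
    have hset : Icc x (x + 1) ×ˢ Icc lo lo = {(x, lo), (x + 1, lo)} := by
      ext ⟨p, q⟩
      simp only [mem_prod, mem_Icc, mem_insert_iff, mem_singleton_iff, Prod.ext_iff]
      omega
    rw [hset]
    exact .pair (adj_iff.2 (by omega))
  | succ hi hlo ih =>
    have hset : Icc x (x + 1) ×ˢ Icc lo (hi + 1) =
        {(x, hi + 1), (x + 1, hi + 1)} ∪ Icc x (x + 1) ×ˢ Icc lo hi := by
      ext ⟨p, q⟩
      simp only [mem_prod, mem_Icc, mem_insert_iff, mem_singleton_iff, mem_union, Prod.ext_iff]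
      omega
    rw [hset]
    exact (HamPathOn.pair (adj_iff.2 (by omega))).append ih (adj_iff.2 (by omega)) (by simp)

lemma hamPathOn_two_columns (x : ℤ) (h : lo ≤ hi) :
    SG.HamPathOn (Icc x (x + 1) ×ˢ Icc lo hi) (x, lo) (x + 1, lo) := by
  have hset : Icc x (x + 1) ×ˢ Icc lo hi = {x} ×ˢ Icc lo hi ∪ {x + 1} ×ˢ Icc lo hi := by
    ext ⟨p, q⟩
    simp only [mem_prod, mem_Icc, mem_singleton_iff, mem_union]
    omega
  rw [hset]
  refine (hamPathOn_column x h).append (hamPathOn_column (x + 1) h).reverse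
    (adj_iff.2 (by omega)) ?_
  rw [Set.disjoint_left]
  rintro ⟨p, q⟩
  simp only [mem_prod, mem_singleton_iff]
  omega

lemma hamPathOn_three_columns (x : ℤ) (h : lo ≤ hi) :
    SG.HamPathOn (Icc x (x + 2) ×ˢ Icc lo hi) (x, lo) (x + 2, lo) := by
  have hset : Icc x (x + 2) ×ˢ Icc lo hi =
      {x} ×ˢ Icc lo hi ∪ Icc (x + 1) (x + 1 + 1) ×ˢ Icc lo hi := by
    ext ⟨p, q⟩
    simp only [mem_prod, mem_Icc, mem_singleton_iff, mem_union]
    omega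
  rw [hset, show x + 2 = x + 1 + 1 by ring]
  refine (hamPathOn_column x h).append (hamPathOn_zigzag (x + 1) h) (adj_iff.2 (by omega)) ?_
  rw [Set.disjoint_left]
  rintro ⟨p, q⟩
  simp only [mem_prod, mem_Icc, mem_singleton_iff]
  omega

lemma hamPathOn_band (h : lo ≤ hi) (x : ℤ) {y : ℤ} (hxy : x < y) :
    SG.HamPathOn (Icc x y ×ˢ Icc lo hi) (x, lo) (y, lo) := by
  let P (y : ℤ) := SG.HamPathOn (Icc x y ×ˢ Icc lo hi) (x, lo) (y, lo)
  suffices ∀ y, x + 1 ≤ y → P y ∧ P (y + 1) from (this y hxy).1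
  intro y hy
  induction y, hy using Int.leInduction with
  | base =>
    exact ⟨hamPathOn_two_columns x h, by
      simpa only [P, add_assoc, one_add_one_eq_two] using hamPathOn_three_columns x h⟩
  | succ y hy ih =>
    refine ⟨ih.2, ?_⟩
    have hset : Icc x (y + 1 + 1) ×ˢ Icc lo hi =
        Icc x y ×ˢ Icc lo hi ∪ Icc (y + 1) (y + 1 + 1) ×ˢ Icc lo hi := by
      ext ⟨p, q⟩
      simp only [mem_prod, mem_Icc, mem_union]
      omega
    simp only [P, hset]
    refine ih.1.append (hamPathOn_two_columns (y + 1) h) (adj_iff.2 (by omega)) ?_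
    rw [Set.disjoint_left]
    rintro ⟨p, q⟩
    simp only [mem_prod, mem_Icc]
    omega

lemma hamPathOn_rectSet_sdiff {m n : ℤ} (hm : 3 ≤ m) (hn : 2 ≤ n) :
    SG.HamPathOn (RectSet m n \ {(2, 1)}) (1, 1) (3, 1) := by
  have hset : RectSet m n \ {(2, 1)} = {(1, 1)} ∪ Icc 1 m ×ˢ Icc 2 n ∪ Icc 3 m ×ˢ {1} := by
    ext ⟨p, q⟩
    simp only [RectSet, mem_sdiff, mem_ofPred_eq, mem_union, mem_prod, mem_Icc,
      mem_singleton_iff, Prod.ext_iff]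
    omega
  rw [hset]
  refine ((HamPathOn.singleton _).append (hamPathOn_band (by omega) 1 (by omega))
    (adj_iff.2 (by omega)) ?_).append (hamPathOn_row 1 (by omega)).reverse
    (adj_iff.2 (by omega)) ?_
  all_goals
    rw [Set.disjoint_left]
    rintro ⟨p, q⟩
    simp only [mem_union, mem_prod, mem_Icc, mem_singleton_iff, Prod.ext_iff]
    omega

end SG

/-- For m ≥ 3 and n ≥ 2, with s=(1,1), t=(2,1), f=(3,1), there exists a
Hamiltonian (s,t)-path of R(m,n) containing the edge (t,f). -/
theorem stmt_6 (m n : ℤ) (hm : 3 ≤ m) (hn : 2 ≤ n)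
    (s t f : RectSet m n)
    (hs : s.val = ((1 : ℤ), (1 : ℤ))) (ht : t.val = ((2 : ℤ), (1 : ℤ)))
    (hf : f.val = ((3 : ℤ), (1 : ℤ))) :
    ∃ w : (Rect m n).Walk s t, w.IsPath ∧ w.IsHamiltonian ∧
      Sym2.mk t f ∈ w.edges := by
  obtain ⟨s, _⟩ := s
  obtain ⟨t, ht'⟩ := t
  obtain ⟨f, _⟩ := f
  obtain rfl : s = (1, 1) := hs
  obtain rfl : t = (2, 1) := ht
  obtain rfl : f = (3, 1) := hf
  obtain ⟨w, hw, hsupp, hedge⟩ := (SG.hamPathOn_rectSet_sdiff hm hn).exists_walk_concat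
    (c := (2, 1)) (SG.adj_iff.2 (by omega)) (by simp)
  rw [Set.insert_sdiff_singleton, Set.insert_eq_of_mem ht'] at hsupp
  have hham := hw.isHamiltonian_induce hsupp
  refine ⟨_, hham.isPath, hham, ?_⟩
  rw [Sym2.eq_swap]
  exact (SimpleGraph.Walk.mem_edges_induce _).2 hedge
end

section
/- Let L(m,n;k,l) be the L-shaped supergrid graph with m−k = 1, n−l = 2, l = 1, and k ≥ 2, and let {s,t} = {(1,2),(2,3)} or {s,t} = {(1,3),(2,2)}. Then L(m,n;k,l) has no Hamiltonian (s,t)-path; moreover, every (s,t)-path in L(m,n;k,l) has length at most mn − kl − 1 (one less than the total number of vertices). -/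
open SimpleGraph

/-!
In `L(m,3;m-1,1)` the vertex `(1,1)` has only the neighbours `(1,2)` and `(2,2)`, and `(1,3)`
only `(1,2)`, `(2,2)`, `(2,3)`. Reading a path by positions, these constraints force a path
between `(1,2)` and `(2,3)` through `(1,1)` and `(1,3)` to be `(1,2),(1,1),(2,2),(1,3),(2,3)`,
and a path between `(1,3)` and `(2,2)` through `(1,1)` to be `(1,3),(1,2),(1,1),(2,2)` or
`(1,3),(2,3),(1,2),(1,1),(2,2)`. So a Hamiltonian path would cover at most 5 of the
`2m + 1 ≥ 7` vertices; and a path that is not Hamiltonian misses a vertex.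
-/

namespace SimpleGraph.Walk

variable {V : Type*} {G : SimpleGraph V} {u v x : V} {w : G.Walk u v}

lemma IsPath.getVert_eq_getVert_iff (hw : w.IsPath) {i j : ℕ} (hi : i ≤ w.length)
    (hj : j ≤ w.length) : w.getVert i = w.getVert j ↔ i = j :=
  ⟨fun h => hw.getVert_injOn hi hj h, fun h => h ▸ rfl⟩

lemma exists_adj_getVert_of_mem_support (hx : x ∈ w.support) (hxu : x ≠ u) (hxv : x ≠ v) :
    ∃ i, i + 2 ≤ w.length ∧ w.getVert (i + 1) = x ∧
      G.Adj x (w.getVert i) ∧ G.Adj x (w.getVert (i + 2)) := by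
  obtain ⟨_ | i, rfl, hi⟩ := mem_support_iff_exists_getVert.mp hx
  · exact absurd w.getVert_zero hxu
  have hlt : i + 1 < w.length :=
    lt_of_le_of_ne hi fun h => hxv (h ▸ w.getVert_length)
  exact ⟨i, hlt, rfl, (w.adj_getVert_succ (by omega)).symm, w.adj_getVert_succ hlt⟩

lemma IsPath.length_support_lt_natCard [Finite V] [DecidableEq V] (hw : w.IsPath)
    (hh : ¬ w.IsHamiltonian) :
    w.support.length < Nat.card V := by
  have : Fintype V := Fintype.ofFinite V
  have hne : w.length ≠ Fintype.card V - 1 := fun h =>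
    hh (isHamiltonian_iff_isPath_and_length_eq.mpr ⟨hw, h⟩)
  rw [Nat.card_eq_fintype_card, w.length_support]
  have := hw.length_lt
  omega

end SimpleGraph.Walk

open SimpleGraph.Walk

/-- The corner `a = (1,1)`, `b = (1,2)`, `c = (2,2)`, `d = (1,3)`, `e = (2,3)` of
`L(m,3;m-1,1)`. -/
structure IsLCorner {V : Type*} (G : SimpleGraph V) (a b c d e : V) : Prop where
  nodup : [a, b, c, d, e].Nodup
  adj_a : ∀ x, G.Adj a x → x = b ∨ x = c
  adj_b : ∀ x, G.Adj b x → x = a ∨ x = c ∨ x = d ∨ x = e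
  adj_d : ∀ x, G.Adj d x → x = b ∨ x = c ∨ x = e

namespace IsLCorner

variable {V : Type*} {G : SimpleGraph V} {a b c d e : V}

theorem length_le_four_of_walk_b_e (h : IsLCorner G a b c d e) {w : G.Walk b e}
    (hw : w.IsPath) (ha : a ∈ w.support) (hd : d ∈ w.support) : w.length ≤ 4 := by
  have hne := h.nodup
  simp only [List.nodup_cons, List.mem_cons, List.not_mem_nil, or_false, not_or] at hne
  obtain ⟨i, hi, rfl, hpre, hsucc⟩ := exists_adj_getVert_of_mem_support ha (by tauto) (by tauto)
  obtain hsucc | rfl := h.adj_a _ hsucc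
  · simp (disch := omega) only [hw.getVert_eq_start_iff] at hsucc; omega
  obtain rfl : i = 0 := by
    have := h.adj_a _ hpre
    simp (disch := omega) only [hw.getVert_eq_start_iff, hw.getVert_eq_getVert_iff] at this
    omega
  obtain ⟨j, hj, rfl, hpre, hsucc⟩ := exists_adj_getVert_of_mem_support hd (by tauto) (by tauto)
  have h1 := h.adj_d _ hpre
  have h2 := h.adj_d _ hsucc
  simp (disch := omega) only [hw.getVert_eq_start_iff, hw.getVert_eq_end_iff,
    hw.getVert_eq_getVert_iff] at h1 h2 hne
  omega

theorem length_le_four_of_walk_d_c (h : IsLCorner G a b c d e) {w : G.Walk d c}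
    (hw : w.IsPath) (ha : a ∈ w.support) : w.length ≤ 4 := by
  have hne := h.nodup
  simp only [List.nodup_cons, List.mem_cons, List.not_mem_nil, or_false, not_or] at hne
  obtain ⟨i, hi, rfl, hpre, hsucc⟩ := exists_adj_getVert_of_mem_support ha (by tauto) (by tauto)
  obtain rfl : w.getVert i = b := (h.adj_a _ hpre).resolve_right fun hc => by
    rw [hw.getVert_eq_end_iff (by omega)] at hc; omega
  have hlen : w.length = i + 2 := by
    have := h.adj_a _ hsucc
    simp (disch := omega) only [hw.getVert_eq_end_iff, hw.getVert_eq_getVert_iff] at this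
    omega
  obtain ⟨i, rfl⟩ : ∃ i', i = i' + 1 :=
    Nat.exists_eq_add_one_of_ne_zero (by rintro rfl; simp at hne)
  have hsnd : G.Adj d (w.getVert 1) := by simpa using w.adj_getVert_succ (i := 0) (by omega)
  rcases h.adj_d _ hsnd with hsnd | hsnd | rfl
  any_goals
    simp (disch := omega) only [hw.getVert_eq_end_iff, hw.getVert_eq_getVert_iff] at hsnd
    omega
  have hpred := h.adj_b _ (w.adj_getVert_succ (i := i) (by omega)).symm
  simp (disch := omega) only [hw.getVert_eq_start_iff, hw.getVert_eq_end_iff,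
    hw.getVert_eq_getVert_iff] at hpred
  omega

theorem natCard_le_five_of_isHamiltonian [DecidableEq V] (h : IsLCorner G a b c d e) {u v : V}
    {w : G.Walk u v} (hw : w.IsHamiltonian)
    (huv : ({u, v} : Set V) = {b, e} ∨ ({u, v} : Set V) = {d, c}) : Nat.card V ≤ 5 := by
  have : Fintype V := hw.fintype
  have hlen : w.length ≤ 4 := by
    have hp := hw.isPath
    rcases huv with huv | huv <;> obtain ⟨rfl, rfl⟩ | ⟨rfl, rfl⟩ := Set.pair_eq_pair_iff.mp huv
    · exact h.length_le_four_of_walk_b_e hp (hw.mem_support a) (hw.mem_support d)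
    · simpa using h.length_le_four_of_walk_b_e hp.reverse
        (by simpa using hw.mem_support a) (by simpa using hw.mem_support d)
    · exact h.length_le_four_of_walk_d_c hp (hw.mem_support a)
    · simpa using h.length_le_four_of_walk_d_c hp.reverse (by simpa using hw.mem_support a)
  rw [Nat.card_eq_fintype_card, ← hw.length_support, w.length_support]
  omega

end IsLCorner

lemma mem_LSet_iff {m k : ℤ} (hmk : m - k = 1) {p : ℤ × ℤ} :
    p ∈ LSet m 3 k 1 ↔ 1 ≤ p.1 ∧ p.1 ≤ m ∧ 1 ≤ p.2 ∧ p.2 ≤ 3 ∧ (p.1 = 1 ∨ 2 ≤ p.2) := by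
  simp only [LSet, Set.mem_ofPred_eq]
  omega

lemma LSet_eq_coe_finset {m k : ℤ} (hmk : m - k = 1) (hm : 1 ≤ m) :
    LSet m 3 k 1 = ↑(insert ((1 : ℤ), (1 : ℤ)) (Finset.Icc 1 m ×ˢ ({2, 3} : Finset ℤ))) := by
  ext ⟨x, y⟩
  simp only [mem_LSet_iff hmk, Finset.coe_insert, Set.mem_insert_iff, Finset.coe_product,
    Set.mem_prod, Finset.coe_Icc, Set.mem_Icc, Finset.coe_singleton,
    Set.mem_singleton_iff, Prod.mk.injEq]
  omega

lemma natCard_LSet {m k : ℤ} (hmk : m - k = 1) (hm : 1 ≤ m) :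
    (Nat.card (LSet m 3 k 1) : ℤ) = 2 * m + 1 := by
  rw [LSet_eq_coe_finset hmk hm, Nat.card_coe_set_eq, Set.ncard_coe_finset,
    Finset.card_insert_of_notMem (by simp), Finset.card_product, Int.card_Icc,
    Finset.card_pair (by norm_num)]
  push_cast
  omega

lemma LG_adj_iff {m n k l : ℤ} {u v : LSet m n k l} :
    (LG m n k l).Adj u v ↔ u.val ≠ v.val ∧ |u.1.1 - v.1.1| ≤ 1 ∧ |u.1.2 - v.1.2| ≤ 1 :=
  Iff.rfl

lemma isLCorner_LG {m k : ℤ} (hmk : m - k = 1) {a b c d e : LSet m 3 k 1}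
    (ha : a.val = (1, 1)) (hb : b.val = (1, 2)) (hc : c.val = (2, 2)) (hd : d.val = (1, 3))
    (he : e.val = (2, 3)) : IsLCorner (LG m 3 k 1) a b c d e := by
  refine ⟨by simp [Subtype.ext_iff, ha, hb, hc, hd, he], ?_, ?_, ?_⟩ <;>
  · rintro ⟨⟨x, y⟩, hx⟩ hadj
    rw [LG_adj_iff, abs_le, abs_le] at hadj
    rw [mem_LSet_iff hmk] at hx
    simp only [Subtype.ext_iff, ha, hb, hc, hd, he, ne_eq, Prod.mk.injEq] at hadj ⊢
    omega

theorem LG_walk_not_isHamiltonian {m k : ℤ} (hmk : m - k = 1) (hk : 2 ≤ k)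
    {s t : LSet m 3 k 1}
    (hst : ({s.val, t.val} : Set (ℤ × ℤ)) = {((1 : ℤ), (2 : ℤ)), ((2 : ℤ), (3 : ℤ))} ∨
           ({s.val, t.val} : Set (ℤ × ℤ)) = {((1 : ℤ), (3 : ℤ)), ((2 : ℤ), (2 : ℤ))})
    (w : (LG m 3 k 1).Walk s t) : ¬ w.IsHamiltonian := by
  intro hw
  have mem (p : ℤ × ℤ) (hp : 1 ≤ p.1 ∧ p.1 ≤ 2 ∧ 1 ≤ p.2 ∧ p.2 ≤ 3 ∧ (p.1 = 1 ∨ 2 ≤ p.2)) :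
      p ∈ LSet m 3 k 1 :=
    (mem_LSet_iff hmk).2 (by omega)
  have hpair (x y : LSet m 3 k 1) (h : ({s.val, t.val} : Set (ℤ × ℤ)) = {x.val, y.val}) :
      ({s, t} : Set (LSet m 3 k 1)) = {x, y} :=
    Set.image_injective.mpr Subtype.val_injective (by simpa only [Set.image_pair] using h)
  have hcorner := isLCorner_LG hmk (a := ⟨(1, 1), mem _ (by decide)⟩)
    (b := ⟨(1, 2), mem _ (by decide)⟩) (c := ⟨(2, 2), mem _ (by decide)⟩)
    (d := ⟨(1, 3), mem _ (by decide)⟩) (e := ⟨(2, 3), mem _ (by decide)⟩) rfl rfl rfl rfl rfl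
  have hle := hcorner.natCard_le_five_of_isHamiltonian hw (hst.imp (hpair _ _) (hpair _ _))
  have := natCard_LSet hmk (by omega)
  omega

/-- For L(m,n;k,l) with m-k = 1, n-l = 2, l = 1, k ≥ 2, and
{s,t} = {(1,2),(2,3)} or {(1,3),(2,2)}, there is no Hamiltonian (s,t)-path,
and every (s,t)-path has length (number of vertices) at most mn - kl - 1. -/
theorem stmt_14 (m n k l : ℤ) (hmk : m - k = 1) (hnl : n - l = 2) (hl : l = 1)
    (hk : 2 ≤ k) (s t : LSet m n k l)
    (hst : ({s.val, t.val} : Set (ℤ × ℤ)) = {((1 : ℤ), (2 : ℤ)), ((2 : ℤ), (3 : ℤ))} ∨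
           ({s.val, t.val} : Set (ℤ × ℤ)) = {((1 : ℤ), (3 : ℤ)), ((2 : ℤ), (2 : ℤ))}) :
    (∀ w : (LG m n k l).Walk s t, ¬ (w.IsPath ∧ w.IsHamiltonian)) ∧
      ∀ w : (LG m n k l).Walk s t, w.IsPath →
        (w.support.length : ℤ) ≤ m * n - k * l - 1 := by
  subst hl
  obtain rfl : n = 3 := by omega
  have hcard := natCard_LSet hmk (by omega)
  have : Finite (LSet m 3 k 1) := Nat.finite_of_card_ne_zero (by omega)
  have hHam := LG_walk_not_isHamiltonian hmk hk hst
  refine ⟨fun w hw => hHam w hw.2, fun w hw => ?_⟩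
  have := hw.length_support_lt_natCard (hHam w)
  omega
end

section
/- Let R(m,2) be a rectangular supergrid graph with m ≥ 2, and let s, t be two distinct vertices such that it is not the case that s_x = t_x with 2 ≤ s_x ≤ m−1. Then R(m,2) contains a Hamiltonian (s,t)-path. -/
open SimpleGraph

/-
In the supergrid every vertex of column `x` is adjacent to every vertex of column `x + 1`, so
Hamiltonian paths of consecutive blocks of columns concatenate freely. If `s_x < t_x`, run from
`s` along its row to column 1, back along the other row to column `s_x`, zigzag through the
columns strictly between, then along the other row to column `m` and back along `t`'s row to `t`.
If `s_x = t_x ∈ {1, m}` a single U-turn along both rows suffices, and `s_x > t_x` is the reverse.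
-/

namespace SimpleGraph

variable {V : Type*} {G : SimpleGraph V} {S T : Set V} {l l₁ l₂ : List V} {u v w x : V}

/-- `l` is the vertex sequence of a Hamiltonian path of `G.induce S` from `u` to `v`. -/
structure IsHamiltonianList (G : SimpleGraph V) (S : Set V) (l : List V) (u v : V) : Prop where
  isChain : l.IsChain G.Adj
  nodup : l.Nodup
  mem_iff : ∀ x, x ∈ l ↔ x ∈ S
  head? : l.head? = some u
  getLast? : l.getLast? = some v

theorem isHamiltonianList_singleton (u : V) : G.IsHamiltonianList {u} [u] u u :=
  ⟨List.isChain_singleton u, List.nodup_singleton u, by simp, rfl, rfl⟩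

namespace IsHamiltonianList

theorem start_mem (h : G.IsHamiltonianList S l u v) : u ∈ S :=
  (h.mem_iff u).1 (List.mem_of_mem_head? h.head?)

theorem reverse (h : G.IsHamiltonianList S l u v) : G.IsHamiltonianList S l.reverse v u where
  isChain := List.isChain_reverse.2 (h.isChain.imp fun _ _ hab => hab.symm)
  nodup := List.nodup_reverse.2 h.nodup
  mem_iff x := by rw [List.mem_reverse, h.mem_iff]
  head? := by rw [List.head?_reverse, h.getLast?]
  getLast? := by rw [List.getLast?_reverse, h.head?]

theorem append (h₁ : G.IsHamiltonianList S l₁ u v) (h₂ : G.IsHamiltonianList T l₂ w x)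
    (hvw : G.Adj v w) (hST : Disjoint S T) : G.IsHamiltonianList (S ∪ T) (l₁ ++ l₂) u x where
  isChain := List.isChain_append.2 ⟨h₁.isChain, h₂.isChain, by
    simpa [h₁.getLast?, h₂.head?] using hvw⟩
  nodup := List.nodup_append.2 ⟨h₁.nodup, h₂.nodup, fun a ha b hb hab =>
    Set.disjoint_left.1 hST ((h₁.mem_iff a).1 ha) (hab ▸ (h₂.mem_iff b).1 hb)⟩
  mem_iff y := by rw [List.mem_append, h₁.mem_iff, h₂.mem_iff, Set.mem_union]
  head? := by rw [List.head?_append, h₁.head?, Option.some_or]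
  getLast? := by rw [List.getLast?_append, h₂.getLast?, Option.some_or]

theorem exists_walk_isHamiltonian [DecidableEq V] {u v : S}
    (h : G.IsHamiltonianList S l u v) : ∃ p : (G.induce S).Walk u v, p.IsHamiltonian := by
  have hne : l ≠ [] := by rintro rfl; simpa using h.head?
  let p : G.Walk u v := (Walk.ofSupport l hne h.isChain).copy
    (Option.some_injective _ ((List.head?_eq_some_head hne).symm.trans h.head?))
    (Option.some_injective _ ((List.getLast?_eq_some_getLast hne).symm.trans h.getLast?))
  have hp : p.support = l := by simp [p]
  refine ⟨p.induce S fun y hy => (h.mem_iff y).1 (hp ▸ hy), ?_⟩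
  refine Walk.IsPath.isHamiltonian_of_mem ?_ fun y => ?_
  · rw [Walk.isPath_def, Walk.support_induce]
    exact List.Nodup.of_map Subtype.val (by simpa [hp] using h.nodup)
  · simp [Walk.support_induce, hp, h.mem_iff]

end IsHamiltonianList

end SimpleGraph

theorem sg_adj_of {a b c d : ℤ}
    (h : (a ≠ c ∨ b ≠ d) ∧ a - c ≤ 1 ∧ c - a ≤ 1 ∧ b - d ≤ 1 ∧ d - b ≤ 1) :
    SG.Adj (a, b) (c, d) :=
  ⟨by simp only [ne_eq, Prod.mk.injEq]; omega, abs_le.2 ⟨by omega, by omega⟩,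
    abs_le.2 ⟨by omega, by omega⟩⟩

/-- `RectSet m 2` is definitionally `strip 1 m`. -/
def strip (c d : ℤ) : Set (ℤ × ℤ) := {p | c ≤ p.1 ∧ p.1 ≤ d ∧ 1 ≤ p.2 ∧ p.2 ≤ 2}

theorem exists_isHamiltonianList_row (y : ℤ) {c d : ℤ} (h : c ≤ d) :
    ∃ l, SG.IsHamiltonianList {p | c ≤ p.1 ∧ p.1 ≤ d ∧ p.2 = y} l (c, y) (d, y) := by
  induction d, h using Int.leInduction with
  | base =>
    refine ⟨[(c, y)], ?_⟩
    convert isHamiltonianList_singleton (G := SG) (c, y) using 1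
    ext ⟨x, y'⟩; simp only [Set.mem_ofPred_eq, Set.mem_singleton_iff, Prod.mk.injEq]; omega
  | succ d hcd ih =>
    obtain ⟨l, hl⟩ := ih
    refine ⟨l ++ [(d + 1, y)], ?_⟩
    convert hl.append (isHamiltonianList_singleton (d + 1, y)) (sg_adj_of (by omega)) ?_ using 1
    · ext ⟨x, y'⟩
      simp only [Set.mem_ofPred_eq, Set.mem_union, Set.mem_singleton_iff, Prod.mk.injEq]
      omega
    · simp only [Set.disjoint_singleton_right, Set.mem_ofPred_eq]; omega

theorem strip_union_strip {c d d' e : ℤ} (h₁ : c ≤ d') (h₂ : d' ≤ d + 1) (h₃ : d ≤ e) :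
    strip c d ∪ strip d' e = strip c e := by
  ext ⟨x, y⟩; simp only [strip, Set.mem_union, Set.mem_ofPred_eq]; omega

theorem disjoint_strip_strip {c d d' e : ℤ} (h : d < d') : Disjoint (strip c d) (strip d' e) :=
  Set.disjoint_left.2 fun _ h₁ h₂ => by simp only [strip, Set.mem_ofPred_eq] at h₁ h₂; omega

theorem strip_eq_row_union_row {c d r r' : ℤ} (hr : 1 ≤ r ∧ r ≤ 2) (hr' : 1 ≤ r' ∧ r' ≤ 2)
    (hrr' : r ≠ r') :
    strip c d = {p | c ≤ p.1 ∧ p.1 ≤ d ∧ p.2 = r} ∪ {p | c ≤ p.1 ∧ p.1 ≤ d ∧ p.2 = r'} := by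
  ext ⟨x, y⟩; simp only [strip, Set.mem_union, Set.mem_ofPred_eq]; omega

theorem disjoint_row_row {c d r r' : ℤ} (hrr' : r ≠ r') :
    Disjoint {p : ℤ × ℤ | c ≤ p.1 ∧ p.1 ≤ d ∧ p.2 = r} {p | c ≤ p.1 ∧ p.1 ≤ d ∧ p.2 = r'} :=
  Set.disjoint_left.2 fun _ h₁ h₂ => hrr' (h₁.2.2.symm.trans h₂.2.2)

theorem exists_isHamiltonianList_strip_left_column {c d r r' : ℤ} (hcd : c ≤ d)
    (hr : 1 ≤ r ∧ r ≤ 2) (hr' : 1 ≤ r' ∧ r' ≤ 2) (hrr' : r ≠ r') :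
    ∃ l, SG.IsHamiltonianList (strip c d) l (c, r) (c, r') := by
  obtain ⟨l, hl⟩ := exists_isHamiltonianList_row r hcd
  obtain ⟨l', hl'⟩ := exists_isHamiltonianList_row r' hcd
  rw [strip_eq_row_union_row hr hr' hrr']
  exact ⟨l ++ l'.reverse, hl.append hl'.reverse (sg_adj_of (by omega)) (disjoint_row_row hrr')⟩

theorem exists_isHamiltonianList_strip_right_column {c d r r' : ℤ} (hcd : c ≤ d)
    (hr : 1 ≤ r ∧ r ≤ 2) (hr' : 1 ≤ r' ∧ r' ≤ 2) (hrr' : r ≠ r') :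
    ∃ l, SG.IsHamiltonianList (strip c d) l (d, r) (d, r') := by
  obtain ⟨l, hl⟩ := exists_isHamiltonianList_row r hcd
  obtain ⟨l', hl'⟩ := exists_isHamiltonianList_row r' hcd
  rw [strip_eq_row_union_row hr hr' hrr']
  exact ⟨l.reverse ++ l', hl.reverse.append hl' (sg_adj_of (by omega)) (disjoint_row_row hrr')⟩

theorem exists_isHamiltonianList_strip_of_le {b d q : ℤ} (hbd : b ≤ d) (hq : 1 ≤ q ∧ q ≤ 2)
    {c : ℤ} (hcb : c ≤ b) : ∃ l r, SG.IsHamiltonianList (strip c d) l (c, r) (b, q) := by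
  induction c, hcb using Int.leInductionDown with
  | base =>
    obtain ⟨l, hl⟩ :=
      exists_isHamiltonianList_strip_left_column hbd (r := 3 - q) (by omega) hq (by omega)
    exact ⟨l, 3 - q, hl⟩
  | pred c hcb ih =>
    obtain ⟨l, r, hl⟩ := ih
    have hr := hl.start_mem.2.2
    obtain ⟨col, hcol⟩ := exists_isHamiltonianList_strip_left_column (le_refl (c - 1))
      (r := 1) (r' := 2) (by omega) (by omega) (by omega)
    refine ⟨col ++ l, 1, ?_⟩
    rw [← strip_union_strip (c := c - 1) (d := c - 1) (d' := c) (e := d) (by omega) (by omega)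
      (by omega)]
    exact hcol.append hl (sg_adj_of (by omega)) (disjoint_strip_strip (by omega))

theorem exists_isHamiltonianList_strip_of_lt {m a b p q : ℤ} (ha : 1 ≤ a) (hab : a < b)
    (hbm : b ≤ m) (hp : 1 ≤ p ∧ p ≤ 2) (hq : 1 ≤ q ∧ q ≤ 2) :
    ∃ l, SG.IsHamiltonianList (strip 1 m) l (a, p) (b, q) := by
  obtain ⟨left, hleft⟩ :=
    exists_isHamiltonianList_strip_right_column ha (r' := 3 - p) hp (by omega) (by omega)
  obtain ⟨right, r, hright⟩ := exists_isHamiltonianList_strip_of_le hbm hq (c := a + 1) hab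
  have hr := hright.start_mem.2.2
  rw [← strip_union_strip (d := a) (d' := a + 1) (by omega) (by omega) (hab.le.trans hbm)]
  exact ⟨left ++ right,
    hleft.append hright (sg_adj_of (by omega)) (disjoint_strip_strip (by omega))⟩

theorem stmt_18_general (m : ℤ) (s t : RectSet m 2) (hst : s ≠ t)
    (h : ¬ (s.val.1 = t.val.1 ∧ 2 ≤ s.val.1 ∧ s.val.1 ≤ m - 1)) :
    ∃ w : (Rect m 2).Walk s t, w.IsPath ∧ w.IsHamiltonian := by
  suffices ∃ l, SG.IsHamiltonianList (strip 1 m) l s t by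
    obtain ⟨l, hl⟩ := this
    obtain ⟨w, hw⟩ := hl.exists_walk_isHamiltonian (S := RectSet m 2)
    exact ⟨w, hw.isPath, hw⟩
  obtain ⟨⟨a, p⟩, ha, ham, hp⟩ := s
  obtain ⟨⟨b, q⟩, hb, hbm, hq⟩ := t
  simp only at h
  rcases lt_trichotomy a b with hab | rfl | hab
  · exact exists_isHamiltonianList_strip_of_lt ha hab hbm hp hq
  · have hpq : p ≠ q := by rintro rfl; exact hst rfl
    rcases (by omega : a = 1 ∨ a = m) with rfl | rfl
    · exact exists_isHamiltonianList_strip_left_column ham hp hq hpq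
    · exact exists_isHamiltonianList_strip_right_column hb hp hq hpq
  · obtain ⟨l, hl⟩ := exists_isHamiltonianList_strip_of_lt hb hab ham hq hp
    exact ⟨l.reverse, hl.reverse⟩

/-- For m ≥ 2 and distinct s,t in R(m,2) not satisfying
(s_x = t_x with 2 ≤ s_x ≤ m-1), R(m,2) has a Hamiltonian (s,t)-path. -/
theorem stmt_18 (m : ℤ) (hm : 2 ≤ m) (s t : RectSet m 2) (hst : s ≠ t)
    (h : ¬ (s.val.1 = t.val.1 ∧ 2 ≤ s.val.1 ∧ s.val.1 ≤ m - 1)) :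
    ∃ w : (Rect m 2).Walk s t, w.IsPath ∧ w.IsHamiltonian :=
  stmt_18_general m s t hst h
end

section
/- For m ≥ n ≥ 3, every pair of distinct vertices s, t of the rectangular supergrid graph R(m,n) admits a Hamiltonian (s,t)-path; that is, R(m,n) is Hamiltonian connected for m, n ≥ 3. -/
open SimpleGraph

/-!
Induction on the semiperimeter of a box `[a, b] × [c, d]`, for all pairs `s ≠ t` that avoid the
obstructions of thin boxes. When a vertical line separates `s` from `t`, a Hamiltonian path of the
left part from `s` to a point of the cut, followed by one of the right part from an adjacent point
to `t`, is a Hamiltonian path of the box; the two points on the cut can be chosen so that both parts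
are again admissible unless one part is a single column whose endpoint is not a corner. In boxes
with both sides at least three this leaves only an endpoint in the middle of a side column with the
other one in the next column, or in the opposite column of a box of width three; these are either
cut horizontally or routed by hand through three or four smaller boxes.
-/

open Set

namespace Supergrid

theorem sg_adj_iff {p q : ℤ × ℤ} :
    SG.Adj p q ↔ p ≠ q ∧ |p.1 - q.1| ≤ 1 ∧ |p.2 - q.2| ≤ 1 :=
  Iff.rfl

def HasHamPath (S : Set (ℤ × ℤ)) (s t : ℤ × ℤ) : Prop :=
  ∃ w : SG.Walk s t, w.IsPath ∧ ∀ p, p ∈ w.support ↔ p ∈ S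

namespace HasHamPath

variable {S T : Set (ℤ × ℤ)} {s t u v : ℤ × ℤ}

theorem left_mem (h : HasHamPath S s t) : s ∈ S :=
  let ⟨w, _, hw⟩ := h; (hw s).1 w.start_mem_support

theorem right_mem (h : HasHamPath S s t) : t ∈ S :=
  let ⟨w, _, hw⟩ := h; (hw t).1 w.end_mem_support

theorem singleton (p : ℤ × ℤ) : HasHamPath {p} p p :=
  ⟨.nil, .nil, by simp⟩

theorem reverse (h : HasHamPath S s t) : HasHamPath S t s :=
  let ⟨w, hp, hw⟩ := h; ⟨w.reverse, hp.reverse, by simpa using hw⟩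

theorem append (h₁ : HasHamPath S s u) (h₂ : HasHamPath T v t) (huv : SG.Adj u v)
    (hST : Disjoint S T) : HasHamPath (S ∪ T) s t := by
  obtain ⟨w₁, hp₁, hw₁⟩ := h₁
  obtain ⟨w₂, hp₂, hw₂⟩ := h₂
  refine ⟨w₁.append (.cons huv w₂), ?_, fun p => ?_⟩
  · rw [Walk.isPath_def, Walk.support_append, Walk.support_cons, List.tail_cons]
    refine hp₁.support_nodup.append hp₂.support_nodup fun p h₁ h₂ => ?_
    exact disjoint_left.1 hST ((hw₁ p).1 h₁) ((hw₂ p).1 h₂)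
  · simp only [Walk.support_append, Walk.support_cons, List.tail_cons, List.mem_append, hw₁, hw₂,
      mem_union]

theorem map {f : ℤ × ℤ → ℤ × ℤ} (hf : ∀ p q, SG.Adj p q → SG.Adj (f p) (f q))
    (hinj : f.Injective) (h : HasHamPath S s t) : HasHamPath (f '' S) (f s) (f t) := by
  obtain ⟨w, hp, hw⟩ := h
  refine ⟨w.map ⟨f, hf _ _⟩, hp.map hinj, fun p => ?_⟩
  simp [Walk.support_map, hw]

end HasHamPath

variable {a b c d : ℤ} {s t : ℤ × ℤ}

theorem HasHamPath.transpose (h : HasHamPath (Icc a b ×ˢ Icc c d) s t) :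
    HasHamPath (Icc c d ×ˢ Icc a b) s.swap t.swap := by
  have := h.map (fun p q ⟨hne, h₁, h₂⟩ => ⟨by simpa using hne, h₂, h₁⟩) Prod.swap_injective
  rwa [image_swap_prod] at this

theorem HasHamPath.reflect_fst (h : HasHamPath (Icc a b ×ˢ Icc c d) s t) :
    HasHamPath (Icc a b ×ˢ Icc c d) (a + b - s.1, s.2) (a + b - t.1, t.2) := by
  have hinj : (Prod.map (a + b - ·) (id : ℤ → ℤ)).Injective :=
    (Equiv.subLeft (a + b)).injective.prodMap Function.injective_id
  have := h.map (fun p q ⟨hne, h₁, h₂⟩ => ⟨hinj.ne hne,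
    by rwa [Prod.map_fst, Prod.map_fst, sub_sub_sub_cancel_left, abs_sub_comm], h₂⟩) hinj
  rwa [prodMap_image_prod, image_const_sub_Icc, image_id, add_sub_cancel_right,
    add_sub_cancel_left] at this

theorem HasHamPath.reflect_snd (h : HasHamPath (Icc a b ×ˢ Icc c d) s t) :
    HasHamPath (Icc a b ×ˢ Icc c d) (s.1, c + d - s.2) (t.1, c + d - t.2) :=
  h.transpose.reflect_fst.transpose

theorem hasHamPath_column (x : ℤ) {y y' : ℤ} (h : y ≤ y') :
    HasHamPath (Icc x x ×ˢ Icc y y') (x, y) (x, y') := by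
  induction y', h using Int.leInduction with
  | base => convert HasHamPath.singleton (x, y); grind
  | succ z _ ih =>
    convert ih.append (.singleton (x, z + 1)) (by grind [sg_adj_iff, abs_le]) (by grind) using 1
    grind

theorem HasHamPath.glue_cols {k y y' : ℤ} (h₁ : HasHamPath (Icc a k ×ˢ Icc c d) s (k, y))
    (h₂ : HasHamPath (Icc (k + 1) b ×ˢ Icc c d) (k + 1, y') t) (hy : |y - y'| ≤ 1) :
    HasHamPath (Icc a b ×ˢ Icc c d) s t := by
  have hk := h₁.right_mem
  have hk' := h₂.left_mem
  simp only [mem_prod, mem_Icc] at hk hk'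
  convert h₁.append h₂ (by grind [sg_adj_iff]) (by grind) using 1
  grind

-- The negation of the obstruction (F1): a single column has a Hamiltonian path only between its
-- two ends, and in a box of width two the two points of an inner row form a vertex cut.
def Admissible (a b c d : ℤ) (s t : ℤ × ℤ) : Prop :=
  s ∈ Icc a b ×ˢ Icc c d ∧ t ∈ Icc a b ×ˢ Icc c d ∧ s ≠ t ∧
    (a = b → s.2 = c ∧ t.2 = d ∨ s.2 = d ∧ t.2 = c) ∧
    (c = d → s.1 = a ∧ t.1 = b ∨ s.1 = b ∧ t.1 = a) ∧
    (b = a + 1 → ¬(s.2 = t.2 ∧ c < s.2 ∧ s.2 < d)) ∧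
    (d = c + 1 → ¬(s.1 = t.1 ∧ a < s.1 ∧ s.1 < b))

theorem Admissible.symm (h : Admissible a b c d s t) : Admissible a b c d t s := by
  unfold Admissible at *; grind

theorem Admissible.swap (h : Admissible a b c d s t) : Admissible c d a b s.swap t.swap := by
  unfold Admissible at *; grind

def HamConnectedBelow (r : ℤ) : Prop :=
  ∀ ⦃a b c d : ℤ⦄ ⦃s t : ℤ × ℤ⦄, b - a + (d - c) < r → Admissible a b c d s t →
    HasHamPath (Icc a b ×ˢ Icc c d) s t

theorem HamConnectedBelow.mono {r r' : ℤ} (h : HamConnectedBelow r) (hr : r' ≤ r) :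
    HamConnectedBelow r' :=
  fun _ _ _ _ _ _ hsize ↦ h (hsize.trans_le hr)

-- `P` (resp. `Q`) holds when the left (resp. right) part of a vertical cut is a single column.
theorem exists_cut_rows {y y' : ℤ} {P Q : Prop} (hcd : c < d) (hy : y ∈ Icc c d)
    (hy' : y' ∈ Icc c d) (hP : P → y = c ∨ y = d) (hQ : Q → y' = c ∨ y' = d)
    (hPQ : P → Q → y = y' ∨ d = c + 1) :
    ∃ z z', z ∈ Icc c d ∧ z' ∈ Icc c d ∧ z ≠ y ∧ z' ≠ y' ∧ |z - z'| ≤ 1 ∧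
      (P → z = c ∨ z = d) ∧ (Q → z' = c ∨ z' = d) := by
  simp only [mem_Icc, abs_le] at *
  by_cases hp : P <;> by_cases hq : Q
  · exact ⟨c + d - y, c + d - y', by grind⟩
  · exact ⟨c + d - y, if y' = c + d - y then (if y = c then d - 1 else c + 1) else c + d - y,
      by grind⟩
  · exact ⟨if y = c + d - y' then (if y' = c then d - 1 else c + 1) else c + d - y', c + d - y',
      by grind⟩
  · by_cases h2 : d = c + 1
    · exact ⟨c + d - y, c + d - y', by grind⟩
    · let r := if c ≠ y ∧ c ≠ y' then c else if c + 1 ≠ y ∧ c + 1 ≠ y' then c + 1 else c + 2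
      exact ⟨r, r, by grind⟩

theorem hasHamPath_column_of_admissible (h : Admissible a a c d s t) :
    HasHamPath (Icc a a ×ˢ Icc c d) s t := by
  obtain ⟨x, y⟩ := s
  obtain ⟨x', y'⟩ := t
  unfold Admissible at h
  simp only [mem_prod, mem_Icc] at h
  obtain ⟨rfl, rfl⟩ : x = a ∧ x' = a := by omega
  obtain ⟨rfl, rfl⟩ | ⟨rfl, rfl⟩ : y = c ∧ y' = d ∨ y = d ∧ y' = c := by grind
  · apply hasHamPath_column; omega
  · apply HasHamPath.reverse; apply hasHamPath_column; omega

section Step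

variable (ih : HamConnectedBelow (b - a + (d - c)))
include ih

theorem HamConnectedBelow.hasHamPath_of_cut {x y x' y' k : ℤ} (hs : (x, y) ∈ Icc a b ×ˢ Icc c d)
    (ht : (x', y') ∈ Icc a b ×ˢ Icc c d) (hxk : x ≤ k) (hkx' : k < x') (hcd : c < d)
    (hL : k = a → y = c ∨ y = d) (hR : k + 1 = b → y' = c ∨ y' = d)
    (hLR : k = a → k + 1 = b → y = y' ∨ d = c + 1) :
    HasHamPath (Icc a b ×ˢ Icc c d) (x, y) (x', y') := by
  simp only [mem_prod, mem_Icc] at hs ht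
  obtain ⟨z, z', hz, hz', hzy, hz'y', hzz', hzL, hz'R⟩ :=
    exists_cut_rows hcd (mem_Icc.2 hs.2) (mem_Icc.2 ht.2) hL hR hLR
  simp only [mem_Icc] at hz hz'
  refine HasHamPath.glue_cols (k := k) (ih ?_ ?_) (ih ?_ ?_) hzz' <;>
    first | omega | unfold Admissible; grind

theorem HamConnectedBelow.hasHamPath_row_pair {y : ℤ} (hab : a + 2 ≤ b) (hy : c < y ∧ y < d) :
    HasHamPath (Icc a b ×ˢ Icc c d) (a, y) (a + 1, y) := by
  have below : HasHamPath (Icc a b ×ˢ Icc c (y - 1)) (a, y - 1) (b, y - 1) :=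
    ih (by omega) (by unfold Admissible; grind)
  have right : HasHamPath (Icc (a + 2) b ×ˢ Icc y d) (b, y) (a + 2, d) :=
    ih (by omega) (by unfold Admissible; grind)
  have left : HasHamPath (Icc a (a + 1) ×ˢ Icc (y + 1) d) (a + 1, d) (a, y + 1) :=
    ih (by omega) (by unfold Admissible; grind)
  convert ((((HasHamPath.singleton (a, y)).append below ?_ ?_).append right ?_ ?_).append
    left ?_ ?_).append (.singleton (a + 1, y)) ?_ ?_ using 1
  all_goals grind [sg_adj_iff]

theorem HamConnectedBelow.hasHamPath_corner_diagonal (hab : a + 2 ≤ b) (hcd : c + 2 ≤ d) :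
    HasHamPath (Icc a b ×ˢ Icc c d) (a, c + 1) (a + 1, c) := by
  have left : HasHamPath (Icc a (a + 1) ×ˢ Icc (c + 2) d) (a, c + 2) (a + 1, d) :=
    ih (by omega) (by unfold Admissible; grind)
  have right : HasHamPath (Icc (a + 2) b ×ˢ Icc c d) (a + 2, d) (a + 2, c) :=
    ih (by omega) (by unfold Admissible; grind)
  convert (((((HasHamPath.singleton (a, c + 1)).append (.singleton (a, c)) ?_ ?_).append
    (.singleton (a + 1, c + 1)) ?_ ?_).append left ?_ ?_).append right ?_ ?_).append
    (.singleton (a + 1, c)) ?_ ?_ using 1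
  all_goals grind [sg_adj_iff]

theorem HamConnectedBelow.hasHamPath_width_three_row {y : ℤ} (hab : b = a + 2)
    (hy : c < y ∧ y < d) :
    HasHamPath (Icc a b ×ˢ Icc c d) (a, y) (b, y) := by
  have below : HasHamPath (Icc a b ×ˢ Icc c (y - 1)) (a, y - 1) (b, y - 1) :=
    ih (by omega) (by unfold Admissible; grind)
  have above : HasHamPath (Icc a b ×ˢ Icc (y + 1) d) (a, y + 1) (b, y + 1) :=
    ih (by omega) (by unfold Admissible; grind)
  convert ((((HasHamPath.singleton (a, y)).append below ?_ ?_).append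
    (.singleton (a + 1, y)) ?_ ?_).append above ?_ ?_).append (.singleton (b, y)) ?_ ?_ using 1
  all_goals grind [sg_adj_iff]

theorem HamConnectedBelow.hasHamPath_left_pair {y y' : ℤ} (hab : a + 2 ≤ b) (hcd : c + 2 ≤ d)
    (hy : c < y ∧ y < d) (hy' : c ≤ y' ∧ y' ≤ d) :
    HasHamPath (Icc a b ×ˢ Icc c d) (a, y) (a + 1, y') := by
  have ih' : HamConnectedBelow (d - c + (b - a)) := ih.mono (by omega)
  rcases lt_trichotomy y y' with h | rfl | h
  · by_cases hd : y = d - 1 ∧ y' = d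
    · convert (ih.hasHamPath_corner_diagonal hab hcd).reflect_snd using 2 <;> grind
    · refine (ih'.hasHamPath_of_cut (k := y) ?_ ?_ ?_ ?_ ?_ ?_ ?_ ?_).transpose <;> grind
  · exact ih.hasHamPath_row_pair hab hy
  · by_cases hc : y = c + 1 ∧ y' = c
    · convert ih.hasHamPath_corner_diagonal hab hcd using 2 <;> grind
    · refine (ih'.hasHamPath_of_cut (k := y - 1) ?_ ?_ ?_ ?_ ?_ ?_ ?_ ?_).reverse.transpose <;>
        grind

theorem HamConnectedBelow.hasHamPath_width_three {y y' : ℤ} (hab : b = a + 2)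
    (hy : c < y ∧ y < d) (hy' : c ≤ y' ∧ y' ≤ d) :
    HasHamPath (Icc a b ×ˢ Icc c d) (a, y) (b, y') := by
  have ih' : HamConnectedBelow (d - c + (b - a)) := ih.mono (by omega)
  rcases lt_trichotomy y y' with h | rfl | h
  · refine (ih'.hasHamPath_of_cut (k := y) ?_ ?_ ?_ ?_ ?_ ?_ ?_ ?_).transpose <;> grind
  · exact ih.hasHamPath_width_three_row hab hy
  · refine (ih'.hasHamPath_of_cut (k := y') ?_ ?_ ?_ ?_ ?_ ?_ ?_ ?_).reverse.transpose <;> grind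

theorem HamConnectedBelow.hasHamPath_of_fst_lt {x y x' y' : ℤ} (hab : a + 2 ≤ b)
    (hcd : c + 2 ≤ d) (h : Admissible a b c d (x, y) (x', y')) (hx : x < x') :
    HasHamPath (Icc a b ×ˢ Icc c d) (x, y) (x', y') := by
  obtain ⟨hs, ht, -⟩ := h
  simp only [mem_prod, mem_Icc] at hs ht
  -- A cut between columns `k` and `k + 1` is blocked only by a side column `k = a` or `k + 1 = b`
  -- whose endpoint is not in a corner row.
  by_cases hsL : x = a ∧ c < y ∧ y < d
  · obtain ⟨rfl, hy⟩ := hsL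
    by_cases h₁ : x' = x + 1
    · subst h₁
      exact ih.hasHamPath_left_pair hab hcd hy ht.2
    by_cases h₂ : x' = b ∧ b = x + 2 ∧ c < y' ∧ y' < d
    · obtain ⟨rfl, hb, -⟩ := h₂
      exact ih.hasHamPath_width_three hb hy ht.2
    refine ih.hasHamPath_of_cut (k := x + 1) ?_ ?_ ?_ ?_ ?_ ?_ ?_ ?_ <;> grind
  by_cases htR : x' = b ∧ c < y' ∧ y' < d
  · obtain ⟨rfl, hy'⟩ := htR
    by_cases h₁ : x = x' - 1
    · convert (ih.hasHamPath_left_pair hab hcd hy' hs.2).reflect_fst.reverse using 2 <;> grind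
    refine ih.hasHamPath_of_cut (k := x' - 2) ?_ ?_ ?_ ?_ ?_ ?_ ?_ ?_ <;> grind
  refine ih.hasHamPath_of_cut (k := x) ?_ ?_ ?_ ?_ ?_ ?_ ?_ ?_ <;> grind

theorem HamConnectedBelow.hasHamPath_of_height_two {x y x' y' : ℤ} (hab : a < b)
    (hcd : d = c + 1) (h : Admissible a b c d (x, y) (x', y')) :
    HasHamPath (Icc a b ×ˢ Icc c d) (x, y) (x', y') := by
  have ih' : HamConnectedBelow (d - c + (b - a)) := ih.mono (by omega)
  unfold Admissible at h
  simp only [mem_prod, mem_Icc] at h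
  rcases lt_trichotomy x x' with hx | rfl | hx
  · refine ih.hasHamPath_of_cut (k := x) ?_ ?_ ?_ ?_ ?_ ?_ ?_ ?_ <;> grind
  · rcases lt_or_gt_of_ne (show y ≠ y' by grind) with hy | hy
    · refine (ih'.hasHamPath_of_cut (k := y) ?_ ?_ ?_ ?_ ?_ ?_ ?_ ?_).transpose <;> grind
    · refine (ih'.hasHamPath_of_cut (k := y') ?_ ?_ ?_ ?_ ?_ ?_ ?_ ?_).reverse.transpose <;> grind
  · refine (ih.hasHamPath_of_cut (k := x') ?_ ?_ ?_ ?_ ?_ ?_ ?_ ?_).reverse <;> grind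

theorem HamConnectedBelow.hasHamPath (h : Admissible a b c d s t) :
    HasHamPath (Icc a b ×ˢ Icc c d) s t := by
  obtain ⟨x, y⟩ := s
  obtain ⟨x', y'⟩ := t
  have hbox := h
  unfold Admissible at hbox
  simp only [mem_prod, mem_Icc] at hbox
  by_cases hab : a = b
  · subst hab
    exact hasHamPath_column_of_admissible h
  by_cases hcd : c = d
  · subst hcd
    exact (hasHamPath_column_of_admissible h.swap).transpose
  by_cases hd : d = c + 1
  · exact ih.hasHamPath_of_height_two (by omega) hd h
  by_cases hb : b = a + 1
  · exact ((ih.mono (by omega)).hasHamPath_of_height_two (by omega) hb h.swap).transpose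
  rcases lt_trichotomy x x' with hx | rfl | hx
  · exact ih.hasHamPath_of_fst_lt (by omega) (by omega) h hx
  · have ih' : HamConnectedBelow (d - c + (b - a)) := ih.mono (by omega)
    rcases lt_or_gt_of_ne (show y ≠ y' by grind) with hy | hy
    · exact (ih'.hasHamPath_of_fst_lt (by omega) (by omega) h.swap hy).transpose
    · exact (ih'.hasHamPath_of_fst_lt (by omega) (by omega) h.symm.swap hy).reverse.transpose
  · exact (ih.hasHamPath_of_fst_lt (by omega) (by omega) h.symm hx).reverse

end Step

theorem hamConnectedBelow (n : ℕ) : HamConnectedBelow n := by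
  induction n with
  | zero =>
    intro a b c d s t hsize h
    unfold Admissible at h
    simp only [mem_prod, mem_Icc] at h
    omega
  | succ n ih =>
    intro a b c d s t hsize h
    rcases lt_or_eq_of_le (show b - a + (d - c) ≤ n by omega) with hlt | heq
    · exact ih hlt h
    · exact (heq ▸ ih).hasHamPath h

theorem hasHamPath_of_admissible (h : Admissible a b c d s t) :
    HasHamPath (Icc a b ×ˢ Icc c d) s t :=
  hamConnectedBelow (b - a + (d - c) + 1).toNat (by omega) h

theorem HasHamPath.exists_isHamiltonian_induce {S : Set (ℤ × ℤ)} (h : HasHamPath S s t) :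
    ∃ w : (SG.induce S).Walk ⟨s, h.left_mem⟩ ⟨t, h.right_mem⟩, w.IsPath ∧ w.IsHamiltonian := by
  obtain ⟨w, hp, hw⟩ := h
  have hwS : ∀ p ∈ w.support, p ∈ S := fun p => (hw p).1
  have hp' : (w.induce S hwS).IsPath :=
    Walk.IsPath.of_map (f := (Embedding.induce S).toHom) (by rwa [Walk.map_induce])
  exact ⟨_, hp', hp'.isHamiltonian_iff.2 fun p => by simp [Walk.support_induce, hw]⟩

end Supergrid

/-- For m ≥ n ≥ 3, R(m,n) is Hamiltonian connected. -/
theorem stmt_19 (m n : ℤ) (hn : 3 ≤ n) (hmn : n ≤ m) :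
    ∀ s t : RectSet m n, s ≠ t →
      ∃ w : (Rect m n).Walk s t, w.IsPath ∧ w.IsHamiltonian := by
  intro s t hst
  have hs := s.2
  have ht := t.2
  simp only [RectSet, mem_ofPred_eq] at hs ht
  have h : Supergrid.HasHamPath (Icc 1 m ×ˢ Icc 1 n) s t :=
    Supergrid.hasHamPath_of_admissible (by
      unfold Supergrid.Admissible
      grind [Subtype.coe_ne_coe])
  have hR : Icc 1 m ×ˢ Icc 1 n = RectSet m n := by
    ext
    simp only [RectSet, mem_ofPred_eq, mem_prod, mem_Icc, and_assoc]
  rw [hR] at h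
  exact h.exists_isHamiltonian_induce
end
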